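/- arXiv:1707.03861 — 7 statements merged into one kernel-verified Lean document; each statement's English description precedes it below -/
import Mathlib

section
/- For elements A and B of an associative unital (not necessarily commutative) algebra, and for every natural number n, (A+B)^n = ∑_{k=0}^n C(n,k) · ((L_A + ad_B)^k applied to 1) · B^{n-k}, where L_A is left multiplication by A and ad_B(X) = BX - XB. -/
/-!
Left multiplication by `A + B` splits as `L_{A+B} = (L_A + ad_B) + R_B` with `ad_B = L_B - R_B`,
and the two summands commute because left and right multiplications always do. The binomial
theorem in the endomorphism ring, applied to `1`, gives the formula, since `R_B ^ (n - k)` maps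
`X` to `X * B ^ (n - k)`.
-/

open LinearMap

section

variable {R 𝔄 : Type*} [CommSemiring R] [Ring 𝔄] [Algebra R 𝔄]

theorem mulLeft_add_eq_mulLeft_add_ad_add_mulRight (A B : 𝔄) :
    mulLeft R (A + B) = mulLeft R A + (mulLeft R B - mulRight R B) + mulRight R B := by
  ext X
  simp only [LinearMap.add_apply, LinearMap.sub_apply, mulLeft_apply, mulRight_apply, add_mul]
  abel

theorem commute_mulLeft_add_ad_mulRight (A B : 𝔄) :
    Commute (mulLeft R A + (mulLeft R B - mulRight R B)) (mulRight R B) :=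
  (commute_mulLeft_right A B).add_left
    ((commute_mulLeft_right B B).sub_left (Commute.refl _))

theorem add_pow_eq_sum_mulLeft_add_ad_pow (A B : 𝔄) (n : ℕ) :
    (A + B) ^ n =
      ∑ k ∈ Finset.range (n + 1),
        n.choose k • (((mulLeft R A + (mulLeft R B - mulRight R B)) ^ k) 1 * B ^ (n - k)) := by
  set T := mulLeft R A + (mulLeft R B - mulRight R B)
  have hcomm : Commute T (mulRight R B) := commute_mulLeft_add_ad_mulRight A B
  calc (A + B) ^ n = (mulLeft R (A + B) ^ n) 1 := by simp [pow_mulLeft]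
    _ = ∑ k ∈ Finset.range (n + 1), n.choose k • (mulRight R B ^ (n - k) * T ^ k) 1 := by
        rw [mulLeft_add_eq_mulLeft_add_ad_add_mulRight, hcomm.add_pow, LinearMap.sum_apply]
        refine Finset.sum_congr rfl fun k _ => ?_
        rw [(hcomm.pow_pow k (n - k)).eq, ← nsmul_eq_mul', LinearMap.smul_apply]
    _ = _ := by simp [pow_mulRight]

end

theorem stmt_0 {𝔄 : Type*} [Ring 𝔄] (A B : 𝔄) (n : ℕ) :
    (A + B) ^ n =
      ∑ k ∈ Finset.range (n + 1),
        n.choose k • ((fun X => A * X + (B * X - X * B))^[k] 1 * B ^ (n - k)) := by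
  have hT : ⇑(mulLeft ℕ A + (mulLeft ℕ B - mulRight ℕ B)) = fun X => A * X + (B * X - X * B) :=
    rfl
  simpa only [Module.End.pow_apply, hT] using add_pow_eq_sum_mulLeft_add_ad_pow (R := ℕ) A B n
end

section
/- In a (possibly noncommutative) Banach algebra with identity (or in the algebra of formal power series over an associative algebra), e^{A+B} = (e^{L_A + ad_B} applied to 1) · e^B, where L_A is left multiplication by A and ad_B(X) = BX - XB. -/
/-!
Write `L a` and `R b` for left multiplication by `a` and right multiplication by `b`. Then
`L_A + ad_B = L (A + B) + R (-B)`, and left and right multiplications commute. Since `a ↦ L a` is a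
continuous ring homomorphism and `b ↦ R b` a continuous ring anti-homomorphism, both commute with
the exponential, so `exp (L_A + ad_B) x = exp (A + B) * x * exp (-B)`. At `x = 1` this gives the
identity after multiplying by `exp B = (exp (-B))⁻¹`.
-/

open NormedSpace MulOpposite

theorem MulOpposite.op_exp (𝕂 : Type*) {𝔸 : Type*} [Field 𝕂] [CharZero 𝕂] [Ring 𝔸] [Algebra 𝕂 𝔸]
    [TopologicalSpace 𝔸] [IsTopologicalRing 𝔸] [T2Space 𝔸] (x : 𝔸) :
    op (exp x) = exp (op x) := by
  simp_rw [exp_eq_tsum 𝕂, ← op_pow, ← op_smul, tsum_op]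

namespace ContinuousLinearMap

noncomputable section Multiplication

variable (𝕜 𝔸 : Type*) [NontriviallyNormedField 𝕜] [NormedRing 𝔸] [NormedAlgebra 𝕜 𝔸]

def mulLeftRingHom : 𝔸 →+* (𝔸 →L[𝕜] 𝔸) where
  toFun := mul 𝕜 𝔸
  map_one' := ext one_mul
  map_mul' a b := ext (mul_assoc a b)
  map_zero' := map_zero _
  map_add' := map_add _

def mulRightRingHom : 𝔸ᵐᵒᵖ →+* (𝔸 →L[𝕜] 𝔸) where
  toFun b := (mul 𝕜 𝔸).flip b.unop
  map_one' := ext mul_one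
  map_mul' a b := ext fun x => (mul_assoc x b.unop a.unop).symm
  map_zero' := map_zero _
  map_add' a b := map_add _ a.unop b.unop

variable {𝕜 𝔸}

theorem commute_mul_mul_flip (a b : 𝔸) : Commute (mul 𝕜 𝔸 a) ((mul 𝕜 𝔸).flip b) :=
  ext fun x => (mul_assoc a x b).symm

end Multiplication

variable {𝕜 𝔸 : Type*} [RCLike 𝕜] [NormedRing 𝔸] [NormedAlgebra 𝕜 𝔸] [CompleteSpace 𝔸]

theorem exp_mul (a : 𝔸) : exp (mul 𝕜 𝔸 a) = mul 𝕜 𝔸 (exp a) :=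
  letI : NormedAlgebra ℚ 𝔸 := .restrictScalars ℚ 𝕜 𝔸
  (map_exp (mulLeftRingHom 𝕜 𝔸) (mul 𝕜 𝔸).continuous a).symm

theorem exp_mul_flip (b : 𝔸) : exp ((mul 𝕜 𝔸).flip b) = (mul 𝕜 𝔸).flip (exp b) := by
  let : NormedAlgebra ℚ 𝔸 := .restrictScalars ℚ 𝕜 𝔸
  have := map_exp (mulRightRingHom 𝕜 𝔸) ((mul 𝕜 𝔸).flip.continuous.comp continuous_unop) (op b)
  rw [← op_exp 𝕜] at this
  exact this.symm

theorem exp_mul_add_mul_flip_apply (a b x : 𝔸) :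
    exp (mul 𝕜 𝔸 a + (mul 𝕜 𝔸).flip b) x = exp a * x * exp b := by
  let : NormedAlgebra ℚ (𝔸 →L[𝕜] 𝔸) := .restrictScalars ℚ 𝕜 (𝔸 →L[𝕜] 𝔸)
  rw [exp_add_of_commute (commute_mul_mul_flip a b), exp_mul, exp_mul_flip]
  exact (mul_assoc _ _ _).symm

end ContinuousLinearMap

open ContinuousLinearMap

theorem stmt_3 {𝔄 : Type*} [NormedRing 𝔄] [NormedAlgebra ℝ 𝔄] [CompleteSpace 𝔄]
    (A B : 𝔄) :
    NormedSpace.exp (A + B) =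
      (NormedSpace.exp
        (ContinuousLinearMap.mul ℝ 𝔄 A + ContinuousLinearMap.mul ℝ 𝔄 B -
          (ContinuousLinearMap.mul ℝ 𝔄).flip B)) 1 * NormedSpace.exp B := by
  let : NormedAlgebra ℚ 𝔄 := .restrictScalars ℚ ℝ 𝔄
  have hsplit : mul ℝ 𝔄 A + mul ℝ 𝔄 B - (mul ℝ 𝔄).flip B =
      mul ℝ 𝔄 (A + B) + (mul ℝ 𝔄).flip (-B) := by
    simp only [map_add, map_neg]
    abel
  rw [hsplit, exp_mul_add_mul_flip_apply, mul_one, mul_assoc,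
    ← exp_add_of_commute (Commute.refl B).neg_left, neg_add_cancel, exp_zero, mul_one]
end

section
/- Let A, B be elements of an associative unital algebra over a commutative ring containing a scalar h, with BA - AB = h·A². Then for all n, (A+B)^n = ∑_{k=0}^n C(n,k) · γ_k(h) · A^k · B^{n-k}, where γ_k(h) = ∏_{j=0}^{k-1}(1 + jh) (with γ_0(h) = 1). -/
/-!
Moving `B` past `A ^ k` with `B A = A B + h A²` gives `B A^k = A^k B + k h A^(k+1)`, so
`(A + B) γ_k A^k B^j = γ_(k+1) A^(k+1) B^j + γ_k A^k B^(j+1)`: left multiplication by `A + B`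
acts on the terms `γ_k A^k B^j` exactly as on commuting monomials, and the binomial theorem
follows by the usual Pascal recursion.
-/

open Finset

namespace ShiftedCommutator

variable {R 𝔄 : Type*} [CommSemiring R] [Semiring 𝔄] [Algebra R 𝔄]

def gamma (h : R) (k : ℕ) : R := ∏ j ∈ range k, (1 + j • h)

theorem gamma_succ (h : R) (k : ℕ) : gamma h (k + 1) = gamma h k * (1 + k • h) :=
  prod_range_succ _ _

variable {h : R} {A B : 𝔄}

theorem mul_pow_eq (hBA : B * A = A * B + h • A ^ 2) (k : ℕ) :
    B * A ^ k = A ^ k * B + (k • h) • A ^ (k + 1) := by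
  induction k with
  | zero => simp
  | succ k ih =>
    calc B * A ^ (k + 1) = (B * A ^ k) * A := by rw [pow_succ, mul_assoc]
      _ = A ^ k * (B * A) + (k • h) • A ^ (k + 2) := by
        rw [ih, add_mul, mul_assoc, smul_mul_assoc, ← pow_succ]
      _ = A ^ (k + 1) * B + ((k + 1) • h) • A ^ (k + 2) := by
        rw [hBA, mul_add, mul_smul_comm, ← mul_assoc, ← pow_succ, ← pow_add, succ_nsmul,
          add_smul]
        abel

theorem add_mul_gamma_smul_pow_mul_pow (hBA : B * A = A * B + h • A ^ 2) (i j : ℕ) :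
    (A + B) * (gamma h i • (A ^ i * B ^ j)) =
      gamma h (i + 1) • (A ^ (i + 1) * B ^ j) + gamma h i • (A ^ i * B ^ (j + 1)) := by
  have hB : B * (A ^ i * B ^ j) = A ^ i * B ^ (j + 1) + (i • h) • (A ^ (i + 1) * B ^ j) := by
    rw [← mul_assoc, mul_pow_eq hBA, add_mul, smul_mul_assoc, mul_assoc, ← pow_succ']
  rw [mul_smul_comm, add_mul, ← mul_assoc, ← pow_succ', hB, gamma_succ, mul_smul, add_smul,
    one_smul]
  simp only [smul_add]
  abel

theorem add_pow_eq_sum_antidiagonal (hBA : B * A = A * B + h • A ^ 2) (n : ℕ) :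
    (A + B) ^ n =
      ∑ ij ∈ antidiagonal n, n.choose ij.1 • (gamma h ij.1 • (A ^ ij.1 * B ^ ij.2)) := by
  induction n with
  | zero => simp [gamma]
  | succ n ih =>
    rw [sum_antidiagonal_choose_succ_nsmul (fun i j => gamma h i • (A ^ i * B ^ j)), pow_succ',
      ih, mul_sum]
    simp only [mul_smul_comm, add_mul_gamma_smul_pow_mul_pow hBA, smul_add, sum_add_distrib]
    rw [add_comm]
    congr 1
    refine sum_congr rfl fun ⟨i, j⟩ hij => ?_
    rw [n.choose_symm_of_eq_add (mem_antidiagonal.1 hij).symm]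

end ShiftedCommutator

open ShiftedCommutator in
theorem stmt_5 {R 𝔄 : Type*} [CommRing R] [Ring 𝔄] [Algebra R 𝔄]
    (h : R) (A B : 𝔄) (hBA : B * A - A * B = h • A ^ 2) (n : ℕ) :
    (A + B) ^ n =
      ∑ k ∈ Finset.range (n + 1),
        n.choose k • ((∏ j ∈ Finset.range k, (1 + j • h)) • (A ^ k * B ^ (n - k))) := by
  rw [add_pow_eq_sum_antidiagonal (sub_eq_iff_eq_add'.mp hBA) n]
  exact Nat.sum_antidiagonal_eq_sum_range_succ
    (fun i j => n.choose i • (gamma h i • (A ^ i * B ^ j))) n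
end

section
/- Let A, B be elements of an associative unital algebra with BA - AB = A². Then for all natural numbers n, (A+B)^n = ∑_{k=0}^n (n!/(n-k)!) · A^k · B^{n-k}. -/
/-!
From `B * A = A * B + A ^ 2` one gets `B * A ^ k = A ^ k * B + k • A ^ (k + 1)`, so multiplying a
normally ordered monomial `A ^ k * B ^ m` on the left by `A + B` gives
`A ^ k * B ^ (m + 1) + (k + 1) • A ^ (k + 1) * B ^ m`. The coefficients of `(A + B) ^ n` therefore
obey `c (n + 1) (k + 1) = c n (k + 1) + (k + 1) * c n k`, the recursion of the falling factorials
`n.descFactorial k = n! / (n - k)!`.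
-/

open Finset

theorem Nat.succ_descFactorial_succ_eq_add (n k : ℕ) :
    (n + 1).descFactorial (k + 1) = n.descFactorial (k + 1) + (k + 1) * n.descFactorial k := by
  simp only [Nat.descFactorial_eq_factorial_mul_choose, Nat.choose_succ_succ, Nat.factorial_succ]
  ring

section FallingFactorialExpansion

variable {R : Type*} [Ring R] {A B : R}

theorem mul_pow_of_sub_eq_sq (h : B * A - A * B = A ^ 2) (k : ℕ) :
    B * A ^ k = A ^ k * B + k • A ^ (k + 1) := by
  induction k with
  | zero => simp
  | succ k ih =>
    have hBA : B * A = A * B + A ^ 2 := by rw [← h]; abel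
    calc B * A ^ (k + 1) = (B * A ^ k) * A := by rw [pow_succ, mul_assoc]
      _ = A ^ k * (B * A) + k • A ^ (k + 2) := by
        rw [ih, add_mul, mul_assoc, smul_mul_assoc, ← pow_succ]
      _ = A ^ (k + 1) * B + (k + 1) • A ^ (k + 2) := by
        rw [hBA, mul_add, ← mul_assoc, ← pow_succ, ← pow_add, add_smul, one_smul]
        abel

theorem add_mul_pow_mul_pow_of_sub_eq_sq (h : B * A - A * B = A ^ 2) (k m : ℕ) :
    (A + B) * (A ^ k * B ^ m) = A ^ k * B ^ (m + 1) + (k + 1) • (A ^ (k + 1) * B ^ m) := by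
  calc (A + B) * (A ^ k * B ^ m) = A ^ (k + 1) * B ^ m + (B * A ^ k) * B ^ m := by
        rw [add_mul, ← mul_assoc, ← pow_succ', mul_assoc]
    _ = A ^ k * B ^ (m + 1) + (k + 1) • (A ^ (k + 1) * B ^ m) := by
        rw [mul_pow_of_sub_eq_sq h, add_mul, mul_assoc, ← pow_succ', smul_mul_assoc, add_smul,
          one_smul]
        abel

theorem add_pow_eq_sum_descFactorial_of_sub_eq_sq (h : B * A - A * B = A ^ 2) (n : ℕ) :
    (A + B) ^ n = ∑ k ∈ range (n + 1), n.descFactorial k • (A ^ k * B ^ (n - k)) := by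
  induction n with
  | zero => simp
  | succ n ih =>
    set T : ℕ → R := fun k => A ^ k * B ^ (n + 1 - k)
    have hT : ∀ k ∈ range (n + 1), (A + B) * (A ^ k * B ^ (n - k)) =
        T k + (k + 1) • T (k + 1) := by
      intro k hk
      have hk : n + 1 - k = n - k + 1 := by rw [mem_range] at hk; omega
      simp only [T, hk, Nat.add_sub_add_right, add_mul_pow_mul_pow_of_sub_eq_sq h]
    have hlast : n.descFactorial (n + 1) • T (n + 1) = 0 := by
      rw [Nat.descFactorial_of_lt (Nat.lt_succ_self n), zero_smul]
    calc (A + B) ^ (n + 1)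
        = ∑ k ∈ range (n + 1), n.descFactorial k • (T k + (k + 1) • T (k + 1)) := by
          rw [pow_succ', ih, mul_sum]
          refine sum_congr rfl fun k hk => ?_
          rw [mul_smul_comm, hT k hk]
      _ = ∑ k ∈ range (n + 2), n.descFactorial k • T k +
            ∑ k ∈ range (n + 1), ((k + 1) * n.descFactorial k) • T (k + 1) := by
          simp only [smul_add, smul_smul, sum_add_distrib, sum_range_succ _ (n + 1), hlast,
            add_zero, mul_comm]
      _ = ∑ k ∈ range (n + 2), (n + 1).descFactorial k • T k := by
          simp only [sum_range_succ' _ (n + 1), Nat.succ_descFactorial_succ_eq_add, add_smul,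
            sum_add_distrib, Nat.descFactorial_zero]
          abel

end FallingFactorialExpansion

theorem stmt_6 {𝔄 : Type*} [Ring 𝔄] [Algebra ℚ 𝔄]
    (A B : 𝔄) (hBA : B * A - A * B = A ^ 2) (n : ℕ) :
    (A + B) ^ n =
      ∑ k ∈ Finset.range (n + 1),
        ((n.factorial : ℚ) / (n - k).factorial) • (A ^ k * B ^ (n - k)) := by
  rw [add_pow_eq_sum_descFactorial_of_sub_eq_sq hBA]
  refine sum_congr rfl fun k hk => ?_
  have hkn : k ≤ n := Nat.lt_succ_iff.mp (mem_range.mp hk)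
  rw [← Nat.factorial_mul_descFactorial hkn, Nat.cast_mul,
    mul_div_cancel_left₀ _ (by positivity), Nat.cast_smul_eq_nsmul]
end

section
/- Let A, B be elements of an associative unital algebra and define M_n = ∑_{k=0}^n C(n,k) A^k B^{n-k}. Then M_1 · M_n = M_{n+1} + ad_B(M_n), where ad_B(X) = BX - XB. -/
open Finset

/-- The sum `∑ₖ C(n,k) Aᵏ Bⁿ⁻ᵏ`, which is `(A + B) ^ n` only when `A` and `B` commute. -/
def binomialSum {R : Type*} [Semiring R] (A B : R) (n : ℕ) : R :=
  ∑ k ∈ range (n + 1), n.choose k • (A ^ k * B ^ (n - k))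

section binomialSum

variable {R : Type*} [Semiring R] (A B : R)

theorem binomialSum_one : binomialSum A B 1 = A + B := by
  simp [binomialSum, sum_range_succ, add_comm]

theorem mul_binomialSum (n : ℕ) :
    A * binomialSum A B n = ∑ k ∈ range (n + 1), n.choose k • (A ^ (k + 1) * B ^ (n - k)) := by
  simp only [binomialSum, mul_sum, mul_smul_comm, ← mul_assoc, ← pow_succ']

theorem binomialSum_mul (n : ℕ) :
    binomialSum A B n * B = ∑ k ∈ range (n + 1), n.choose k • (A ^ k * B ^ (n + 1 - k)) := by
  rw [binomialSum, sum_mul]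
  refine sum_congr rfl fun k hk => ?_
  rw [smul_mul_assoc, mul_assoc, ← pow_succ, Nat.sub_add_comm (mem_range_succ_iff.mp hk)]

-- Pascal's rule `C(n+1,k) = C(n,k) + C(n,k-1)`, split as right multiplication by `B` plus left by `A`.
theorem mul_binomialSum_add_binomialSum_mul (n : ℕ) :
    A * binomialSum A B n + binomialSum A B n * B = binomialSum A B (n + 1) := by
  rw [mul_binomialSum, binomialSum_mul, add_comm, binomialSum,
    sum_choose_succ_nsmul (fun i j => A ^ i * B ^ j) n]

end binomialSum

theorem stmt_8 {𝔄 : Type*} [Ring 𝔄] (A B : 𝔄) (n : ℕ)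
    (M : ℕ → 𝔄)
    (hM : ∀ m, M m = ∑ k ∈ Finset.range (m + 1), m.choose k • (A ^ k * B ^ (m - k))) :
    M 1 * M n = M (n + 1) + (B * M n - M n * B) := by
  obtain rfl : M = binomialSum A B := funext hM
  rw [binomialSum_one, ← mul_binomialSum_add_binomialSum_mul, add_mul]
  abel
end

section
/- Let A, B be elements of an associative unital algebra and M_n = ∑_{k=0}^n C(n,k) A^k B^{n-k}. Then for all n ≥ 2, (A+B)^n = M_n + ∑_{k=0}^{n-2} (A+B)^k · ad_B(M_{n-1-k}), where ad_B(X) = BX - XB. -/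
/-!
Pascal's rule gives `M (m + 1) = A * M m + M m * B`, hence `(A + B) * M m = M (m + 1) + ad_B (M m)`.
Multiplying by `(A + B) ^ k` and summing over `k`, the terms `(A + B) ^ k * M (n - k)` telescope;
the last correction term is `ad_B (M 0) = ad_B 1 = 0`, which is why the sum stops at `n - 2`.
-/

open Finset

section OrderedBinomial

variable {R : Type*}

def orderedBinomial [Semiring R] (A B : R) (m : ℕ) : R :=
  ∑ ij ∈ antidiagonal m, m.choose ij.1 • (A ^ ij.1 * B ^ ij.2)

theorem orderedBinomial_eq_sum_range [Semiring R] (A B : R) (m : ℕ) :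
    orderedBinomial A B m = ∑ k ∈ range (m + 1), m.choose k • (A ^ k * B ^ (m - k)) :=
  Nat.sum_antidiagonal_eq_sum_range_succ (fun i j => m.choose i • (A ^ i * B ^ j)) m

theorem orderedBinomial_zero [Semiring R] (A B : R) : orderedBinomial A B 0 = 1 := by
  simp [orderedBinomial]

theorem orderedBinomial_succ [Semiring R] (A B : R) (m : ℕ) :
    orderedBinomial A B (m + 1) = A * orderedBinomial A B m + orderedBinomial A B m * B := by
  rw [orderedBinomial, sum_antidiagonal_choose_succ_nsmul (fun i j => A ^ i * B ^ j), add_comm,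
    orderedBinomial, mul_sum, sum_mul]
  congr 1 <;> refine sum_congr rfl fun ij hij => ?_
  · rw [Nat.choose_symm_of_eq_add (mem_antidiagonal.mp hij).symm, mul_smul_comm, pow_succ',
      mul_assoc]
  · rw [smul_mul_assoc, pow_succ, mul_assoc]

theorem add_mul_orderedBinomial [Ring R] (A B : R) (m : ℕ) :
    (A + B) * orderedBinomial A B m =
      orderedBinomial A B (m + 1) + (B * orderedBinomial A B m - orderedBinomial A B m * B) := by
  rw [orderedBinomial_succ]
  noncomm_ring

end OrderedBinomial

theorem pow_mul_eq_add_sum_of_mul_eq_succ_add {R : Type*} [Ring R] (S : R) (M D : ℕ → R)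
    (hM : ∀ m, S * M m = M (m + 1) + D m) (n : ℕ) :
    S ^ n * M 0 = M n + ∑ k ∈ range n, S ^ k * D (n - 1 - k) := by
  have hstep : ∀ k ∈ range n, S ^ (k + 1) * M (n - (k + 1)) - S ^ k * M (n - k) =
      S ^ k * D (n - 1 - k) := by
    intro k hk
    have hnk : n - k = n - 1 - k + 1 := by have := mem_range.mp hk; omega
    rw [pow_succ, mul_assoc, hM, hnk, Nat.sub_sub, add_comm 1 k, mul_add]
    abel
  rw [← sum_congr rfl hstep, sum_range_sub (fun k => S ^ k * M (n - k))]
  simp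

theorem stmt_9_general {𝔄 : Type*} [Ring 𝔄] (A B : 𝔄) (n : ℕ)
    (M : ℕ → 𝔄)
    (hM : ∀ m, M m = ∑ k ∈ Finset.range (m + 1), m.choose k • (A ^ k * B ^ (m - k))) :
    (A + B) ^ n =
      M n + ∑ k ∈ Finset.range (n - 1),
        (A + B) ^ k * (B * M (n - 1 - k) - M (n - 1 - k) * B) := by
  obtain rfl : M = orderedBinomial A B :=
    funext fun m => (hM m).trans (orderedBinomial_eq_sum_range A B m).symm
  have htel := pow_mul_eq_add_sum_of_mul_eq_succ_add (A + B) _ _ (add_mul_orderedBinomial A B) n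
  rw [orderedBinomial_zero, mul_one] at htel
  rw [htel]
  rcases n with _ | n
  · simp
  · rw [Nat.add_sub_cancel, sum_range_succ, Nat.sub_self, orderedBinomial_zero,
      mul_one, one_mul, sub_self, mul_zero, add_zero]

theorem stmt_9 {𝔄 : Type*} [Ring 𝔄] (A B : 𝔄) (n : ℕ) (hn : 2 ≤ n)
    (M : ℕ → 𝔄)
    (hM : ∀ m, M m = ∑ k ∈ Finset.range (m + 1), m.choose k • (A ^ k * B ^ (m - k))) :
    (A + B) ^ n =
      M n + ∑ k ∈ Finset.range (n - 1),
        (A + B) ^ k * (B * M (n - 1 - k) - M (n - 1 - k) * B) :=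
  stmt_9_general A B n M hM
end

section
/- For the operators A = multiplication by x and B = λ·(d/dx) on smooth functions (λ a scalar), applying (A+B)^n to the constant function 1 gives (x + λ d/dx)^n 1 = ∑_{k=0}^{⌊n/2⌋} x^{n-2k} · n!/((n-2k)!·k!·2^k) · λ^k. -/
/-!
Write `(x + λ d/dx)^n 1 = ∑ₖ c(n,k) x^(n-2k) λ^k`. The recursion `P_{n+1} = x P_n + λ P_n'` becomes
`c(n+1,k+1) = c(n,k+1) + (n-2k) c(n,k)`, which is Pascal's rule applied to
`c(n,k) = C(n,2k) (2k-1)‼`, the number of `k`-edge matchings of the complete graph on `n` vertices.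
This count vanishes for `2k > n`, so all sums can be taken over one range with no parity split,
and `C(n,2k) (2k-1)‼ = n! / ((n-2k)! k! 2^k)` gives the stated coefficients.
-/

open Finset Nat

def matchingCount (n k : ℕ) : ℕ := n.choose (2 * k) * (2 * k - 1)‼

lemma doubleFactorial_two_mul_add_one (k : ℕ) : (2 * k + 1)‼ = (2 * k + 1) * (2 * k - 1)‼ := by
  cases k with
  | zero => rfl
  | succ j => exact Nat.doubleFactorial_add_two (2 * j + 1)

lemma matchingCount_zero_right (n : ℕ) : matchingCount n 0 = 1 := by simp [matchingCount]

lemma matchingCount_eq_zero_of_lt {n k : ℕ} (h : n < 2 * k) : matchingCount n k = 0 := by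
  simp [matchingCount, Nat.choose_eq_zero_of_lt h]

lemma matchingCount_succ_succ (n k : ℕ) :
    matchingCount (n + 1) (k + 1) = matchingCount n (k + 1) + (n - 2 * k) * matchingCount n k := by
  have h := Nat.choose_succ_right_eq n (2 * k)
  simp only [matchingCount, show 2 * (k + 1) = 2 * k + 1 + 1 by ring, Nat.add_sub_cancel,
    Nat.choose_succ_succ', doubleFactorial_two_mul_add_one]
  rw [add_mul, ← mul_assoc, h]
  ring

lemma matchingCount_mul_factorials {n k : ℕ} (h : 2 * k ≤ n) :
    matchingCount n k * ((n - 2 * k)! * k ! * 2 ^ k) = n ! := by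
  have hfac : (2 * k)! = 2 ^ k * k ! * (2 * k - 1)‼ := by
    rw [← Nat.doubleFactorial_two_mul]
    cases k with
    | zero => rfl
    | succ j =>
      rw [show 2 * (j + 1) = 2 * j + 1 + 1 by ring, Nat.factorial_eq_mul_doubleFactorial]
      rfl
  rw [← Nat.choose_mul_factorial_mul_factorial h, hfac, matchingCount]
  ring

lemma matchingCount_eq_div {n k : ℕ} (h : 2 * k ≤ n) :
    (matchingCount n k : ℝ) = n ! / ((n - 2 * k)! * k ! * 2 ^ k) := by
  rw [eq_div_iff (by positivity)]
  exact_mod_cast matchingCount_mul_factorials h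

noncomputable def matchingPoly (l : ℝ) (n : ℕ) (x : ℝ) : ℝ :=
  ∑ k ∈ range (n + 1), (matchingCount n k : ℝ) * x ^ (n - 2 * k) * l ^ k

lemma hasDerivAt_matchingPoly (l : ℝ) (n : ℕ) (x : ℝ) :
    HasDerivAt (matchingPoly l n)
      (∑ k ∈ range (n + 1),
        (matchingCount n k : ℝ) * ((n - 2 * k : ℕ) * x ^ (n - 2 * k - 1)) * l ^ k) x :=
  HasDerivAt.fun_sum fun _ _ => ((hasDerivAt_pow _ x).const_mul _).mul_const _

lemma matchingCount_mul_pow_succ (n k : ℕ) (x : ℝ) :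
    (matchingCount n k : ℝ) * x ^ (n + 1 - 2 * k) = x * (matchingCount n k * x ^ (n - 2 * k)) := by
  rcases le_or_gt (2 * k) n with h | h
  · rw [Nat.sub_add_comm h, pow_succ]
    ring
  · simp [matchingCount_eq_zero_of_lt h]

lemma matchingPoly_succ (l : ℝ) (n : ℕ) (x : ℝ) :
    matchingPoly l (n + 1) x = x * matchingPoly l n x + l * deriv (matchingPoly l n) x := by
  have hvanish : ∀ k ≥ n + 1, (matchingCount n k : ℝ) * x ^ (n + 1 - 2 * k) * l ^ k = 0 :=
    fun k hk => by simp [matchingCount_eq_zero_of_lt (show n < 2 * k by omega)]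
  have hx : x * matchingPoly l n x =
      ∑ k ∈ range (n + 1), (matchingCount n (k + 1) : ℝ) * x ^ (n + 1 - 2 * (k + 1)) * l ^ (k + 1)
        + x ^ (n + 1) :=
    calc x * matchingPoly l n x
        = ∑ k ∈ range (n + 1), (matchingCount n k : ℝ) * x ^ (n + 1 - 2 * k) * l ^ k := by
          rw [matchingPoly, mul_sum]
          refine sum_congr rfl fun k _ => ?_
          rw [matchingCount_mul_pow_succ]
          ring
      _ = ∑ k ∈ range (n + 2), (matchingCount n k : ℝ) * x ^ (n + 1 - 2 * k) * l ^ k :=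
          (eventually_constant_sum hvanish (n + 1).le_succ).symm
      _ = _ := by simp [sum_range_succ', matchingCount_zero_right]
  rw [(hasDerivAt_matchingPoly l n x).deriv, hx, mul_sum, matchingPoly, sum_range_succ']
  simp only [matchingCount_succ_succ, matchingCount_zero_right, Nat.cast_add, Nat.cast_mul,
    Nat.cast_one, one_mul, mul_zero, Nat.sub_zero, pow_zero, mul_one]
  rw [add_right_comm, ← sum_add_distrib]
  congr 1
  refine sum_congr rfl fun k _ => ?_
  rw [show n + 1 - 2 * (k + 1) = n - 2 * k - 1 by omega]
  ring

lemma iterate_mul_add_mul_deriv_one_eq_matchingPoly (l : ℝ) (n : ℕ) :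
    (fun f : ℝ → ℝ => fun y => y * f y + l * deriv f y)^[n] (fun _ => 1) = matchingPoly l n := by
  induction n with
  | zero => funext x; simp [matchingPoly, matchingCount_zero_right]
  | succ n ih =>
    rw [Function.iterate_succ_apply', ih]
    funext x
    exact (matchingPoly_succ l n x).symm

lemma matchingPoly_eq_sum_factorial_div (l : ℝ) (n : ℕ) (x : ℝ) :
    matchingPoly l n x = ∑ k ∈ range (n / 2 + 1),
      x ^ (n - 2 * k) * ((n ! : ℝ) / ((n - 2 * k)! * k ! * 2 ^ k)) * l ^ k := by
  have hvanish : ∀ k ≥ n / 2 + 1, (matchingCount n k : ℝ) * x ^ (n - 2 * k) * l ^ k = 0 :=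
    fun k hk => by simp [matchingCount_eq_zero_of_lt (show n < 2 * k by omega)]
  rw [matchingPoly, eventually_constant_sum hvanish (by omega)]
  refine sum_congr rfl fun k hk => ?_
  rw [matchingCount_eq_div (by have := mem_range.mp hk; omega)]
  ring

theorem stmt_14 (l : ℝ) (n : ℕ) (x : ℝ) :
    (fun f : ℝ → ℝ => fun y => y * f y + l * deriv f y)^[n] (fun _ => 1) x =
      ∑ k ∈ Finset.range (n / 2 + 1),
        x ^ (n - 2 * k) *
          ((n.factorial : ℝ) / ((n - 2 * k).factorial * k.factorial * 2 ^ k)) * l ^ k := by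
  rw [iterate_mul_add_mul_deriv_one_eq_matchingPoly, matchingPoly_eq_sum_factorial_div]
end
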